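/- The influence function I is submodular: for all S ⊆ T ⊆ BS and every b ∈ BS \ T, I(S ∪ {b}) - I(S) ≥ I(T ∪ {b}) - I(T). -/
import Mathlib


theorem influence_submodular {D BS : Type*} [Fintype D] [DecidableEq BS] (Pr : BS → D → ℝ)
    (h0 : ∀ b t, 0 ≤ Pr b t) (h1 : ∀ b t, Pr b t ≤ 1)
    (S T : Finset BS) (hST : S ⊆ T) (b : BS) (hb : b ∉ T) :
    (∑ t : D, (1 - ∏ x ∈ insert b T, (1 - Pr x t))) - ∑ t : D, (1 - ∏ x ∈ T, (1 - Pr x t)) ≤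
    (∑ t : D, (1 - ∏ x ∈ insert b S, (1 - Pr x t))) - ∑ t : D, (1 - ∏ x ∈ S, (1 - Pr x t)) := by
  have hbS : b ∉ S := fun h => hb (hST h)
  rw [← Finset.sum_sub_distrib, ← Finset.sum_sub_distrib]
  apply Finset.sum_le_sum
  intro t _
  rw [Finset.prod_insert hb, Finset.prod_insert hbS]
  ring_nf
  have key : ∀ U : Finset BS, Pr b t * ∏ x ∈ U, (1 - Pr x t) =
      ∏ x ∈ U, (1 - Pr x t) - (1 - Pr b t) * ∏ x ∈ U, (1 - Pr x t) := by
    intro U; ring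
  have hmono : ∏ x ∈ T, (1 - Pr x t) ≤ ∏ x ∈ S, (1 - Pr x t) := by
    rw [← Finset.prod_sdiff hST]
    have h1' : ∏ x ∈ T \ S, (1 - Pr x t) ≤ 1 :=
      Finset.prod_le_one (fun i _ => by linarith [h1 i t]) (fun i _ => by linarith [h0 i t])
    have h0' : 0 ≤ ∏ x ∈ S, (1 - Pr x t) :=
      Finset.prod_nonneg (fun i _ => by linarith [h1 i t])
    nlinarith
  nlinarith [h0 b t, hmono]
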